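/- Fix q ∈ k^×. Let A = k[u, v, w] with distinguished element a = u + q·v·w and σ the algebra automorphism with σ(u) = u, σ(v) = q^{-1}v, σ(w) = q^{-1}w. Then the generalized Weyl algebra W_{a,σ} is isomorphic to the quantum matrix algebra O_q(M₂) via u ↦ Ω (the quantum determinant ad − q^{-1}bc), v ↦ b, w ↦ c, x ↦ a, y ↦ d. -/

import Mathlib

noncomputable section

open FreeAlgebra

/-- Generators for the skew Laurent polynomial ring `A[x,x⁻¹;σ]`. -/
inductive SLgen (A : Type) : Type
  | incl : A → SLgen A
  | x : SLgen A
  | xinv : SLgen A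

variable (k : Type) [Field k] (A : Type) [Ring A] [Algebra k A]

/-- Relations for the skew Laurent polynomial ring `A[x,x⁻¹;σ]`. -/
inductive SLrel (σ : A ≃ₐ[k] A) : FreeAlgebra k (SLgen A) → FreeAlgebra k (SLgen A) → Prop
  | add (a b : A) : SLrel σ (ι k (SLgen.incl (a + b))) (ι k (SLgen.incl a) + ι k (SLgen.incl b))
  | mul (a b : A) : SLrel σ (ι k (SLgen.incl (a * b))) (ι k (SLgen.incl a) * ι k (SLgen.incl b))
  | alg (c : k) : SLrel σ (ι k (SLgen.incl (algebraMap k A c))) (algebraMap k _ c)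
  | xxinv : SLrel σ (ι k SLgen.x * ι k SLgen.xinv) 1
  | xinvx : SLrel σ (ι k SLgen.xinv * ι k SLgen.x) 1
  | skew (a : A) : SLrel σ (ι k SLgen.x * ι k (SLgen.incl a)) (ι k (SLgen.incl (σ a)) * ι k SLgen.x)

/-- The skew Laurent polynomial ring `A[x,x⁻¹;σ]`. -/
abbrev SkewLaurent (σ : A ≃ₐ[k] A) : Type := RingQuot (SLrel k A σ)

variable (σ : A ≃ₐ[k] A)

/-- The canonical inclusion `A → A[x,x⁻¹;σ]`. -/
def SkewLaurent.incl (a : A) : SkewLaurent k A σ :=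
  RingQuot.mkAlgHom k (SLrel k A σ) (ι k (SLgen.incl a))

/-- The invertible generator `x` of `A[x,x⁻¹;σ]`. -/
def SkewLaurent.X : SkewLaurent k A σ :=
  RingQuot.mkAlgHom k (SLrel k A σ) (ι k SLgen.x)

/-- The inverse `x⁻¹` of the generator of `A[x,x⁻¹;σ]`. -/
def SkewLaurent.Xinv : SkewLaurent k A σ :=
  RingQuot.mkAlgHom k (SLrel k A σ) (ι k SLgen.xinv)

/-- Generators for a generalized Weyl algebra. -/
inductive Wgen (A : Type) : Type
  | incl : A → Wgen A
  | x : Wgen A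
  | y : Wgen A

/-- Relations for the generalized Weyl algebra `W_{a,σ}`. -/
inductive Wrel (σ : A ≃ₐ[k] A) (a : A) :
    FreeAlgebra k (Wgen A) → FreeAlgebra k (Wgen A) → Prop
  | add (u v : A) : Wrel σ a (ι k (Wgen.incl (u + v))) (ι k (Wgen.incl u) + ι k (Wgen.incl v))
  | mul (u v : A) : Wrel σ a (ι k (Wgen.incl (u * v))) (ι k (Wgen.incl u) * ι k (Wgen.incl v))
  | alg (c : k) : Wrel σ a (ι k (Wgen.incl (algebraMap k A c))) (algebraMap k _ c)
  | yx : Wrel σ a (ι k Wgen.y * ι k Wgen.x) (ι k (Wgen.incl a))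
  | xy : Wrel σ a (ι k Wgen.x * ι k Wgen.y) (ι k (Wgen.incl (σ a)))
  | xu (u : A) : Wrel σ a (ι k Wgen.x * ι k (Wgen.incl u)) (ι k (Wgen.incl (σ u)) * ι k Wgen.x)
  | yu (u : A) : Wrel σ a (ι k Wgen.y * ι k (Wgen.incl (σ u))) (ι k (Wgen.incl u) * ι k Wgen.y)

/-- The generalized Weyl algebra `W_{a,σ}`. -/
abbrev GWA (a : A) : Type := RingQuot (Wrel k A σ a)

/-- The canonical inclusion `A → W_{a,σ}`. -/
def GWA.incl (a : A) (u : A) : GWA k A σ a :=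
  RingQuot.mkAlgHom k (Wrel k A σ a) (ι k (Wgen.incl u))

/-- The generator `x` of `W_{a,σ}`. -/
def GWA.X (a : A) : GWA k A σ a :=
  RingQuot.mkAlgHom k (Wrel k A σ a) (ι k Wgen.x)

/-- The generator `y` of `W_{a,σ}`. -/
def GWA.Y (a : A) : GWA k A σ a :=
  RingQuot.mkAlgHom k (Wrel k A σ a) (ι k Wgen.y)


variable (q : k)

/-- Relations of the quantum matrix algebra `O_q(M₂)`: generators `0 = a`, `1 = b`,
`2 = c`, `3 = d` with `bc = cb`, `ab = q⁻¹ba`, `ac = q⁻¹ca`, `db = qbd`, `dc = qcd`,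
`ad - da = (q⁻¹ - q)bc`. -/
inductive M2Rel : FreeAlgebra k (Fin 4) → FreeAlgebra k (Fin 4) → Prop
  | bc : M2Rel (ι k (1 : Fin 4) * ι k (2 : Fin 4)) (ι k (2 : Fin 4) * ι k (1 : Fin 4))
  | ab : M2Rel (ι k (0 : Fin 4) * ι k (1 : Fin 4)) (q⁻¹ • (ι k (1 : Fin 4) * ι k (0 : Fin 4)))
  | ac : M2Rel (ι k (0 : Fin 4) * ι k (2 : Fin 4)) (q⁻¹ • (ι k (2 : Fin 4) * ι k (0 : Fin 4)))
  | db : M2Rel (ι k (3 : Fin 4) * ι k (1 : Fin 4)) (q • (ι k (1 : Fin 4) * ι k (3 : Fin 4)))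
  | dc : M2Rel (ι k (3 : Fin 4) * ι k (2 : Fin 4)) (q • (ι k (2 : Fin 4) * ι k (3 : Fin 4)))
  | ad : M2Rel (ι k (0 : Fin 4) * ι k (3 : Fin 4))
      (ι k (3 : Fin 4) * ι k (0 : Fin 4) + (q⁻¹ - q) • (ι k (1 : Fin 4) * ι k (2 : Fin 4)))

/-- The quantum matrix algebra `O_q(M₂)`. -/
abbrev OqM2 : Type := RingQuot (M2Rel k q)

/-- The generator `a` of `O_q(M₂)`. -/
def OqM2.Ag : OqM2 k q := RingQuot.mkAlgHom k (M2Rel k q) (ι k (0 : Fin 4))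
/-- The generator `b` of `O_q(M₂)`. -/
def OqM2.B : OqM2 k q := RingQuot.mkAlgHom k (M2Rel k q) (ι k (1 : Fin 4))
/-- The generator `c` of `O_q(M₂)`. -/
def OqM2.C : OqM2 k q := RingQuot.mkAlgHom k (M2Rel k q) (ι k (2 : Fin 4))
/-- The generator `d` of `O_q(M₂)`. -/
def OqM2.D : OqM2 k q := RingQuot.mkAlgHom k (M2Rel k q) (ι k (3 : Fin 4))

/-- The quantum determinant `Ω = ad - q⁻¹bc` of `O_q(M₂)`. -/
def OqM2.qdet : OqM2 k q := OqM2.Ag k q * OqM2.D k q - q⁻¹ • (OqM2.B k q * OqM2.C k q)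

/-!
The quantum determinant `Ω = ad - q⁻¹bc` is central in `O_q(M₂)`, so `Ω, b, c` generate a
commutative subalgebra and `u, v, w ↦ Ω, b, c` defines `k[u,v,w] → O_q(M₂)`. The relations
`yx = a` and `xy = σ(a)` of `W_{a,σ}` become the two expressions `Ω = da - qbc = ad - q⁻¹bc` of
the quantum determinant, and `x f = σ(f) x`, `y σ(f) = f y` reduce on generators to the
centrality of `Ω` and the skew commutation of `a` and `d` with `b` and `c`. Conversely, the
relations of `O_q(M₂)` hold in `W_{a,σ}`; in particular `ad - da = (q⁻¹ - q)bc` is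
`xy - yx = σ(a) - a`. The two homomorphisms so defined are mutually inverse on generators.
-/
namespace MvPolynomial

open scoped IsMulCommutative

variable {R B ι : Type*} [CommSemiring R] [Semiring B] [Algebra R B]

def aevalOfCommute (f : ι → B) (hf : ∀ i j, Commute (f i) (f j)) :
    MvPolynomial ι R →ₐ[R] B :=
  haveI := Algebra.isMulCommutative_adjoin R (s := Set.range f) <| by
    rintro _ ⟨i, rfl⟩ _ ⟨j, rfl⟩
    exact hf i j
  (Algebra.adjoin R (Set.range f)).val.comp
    (aeval fun i ↦ ⟨f i, Algebra.subset_adjoin ⟨i, rfl⟩⟩)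

@[simp]
theorem aevalOfCommute_X (f : ι → B) (hf : ∀ i j, Commute (f i) (f j)) (i : ι) :
    aevalOfCommute f hf (X i : MvPolynomial ι R) = f i := by
  simp [aevalOfCommute]

theorem mul_algHom_eq_of_forall_X {f g : MvPolynomial ι R →ₐ[R] B} {x : B}
    (h : ∀ i, x * f (X i) = g (X i) * x) (p : MvPolynomial ι R) : x * f p = g p * x := by
  induction p using MvPolynomial.induction_on with
  | C r => rw [← algebraMap_eq, AlgHom.commutes, AlgHom.commutes, Algebra.commutes]
  | add p₁ p₂ ih₁ ih₂ => rw [map_add, map_add, mul_add, add_mul, ih₁, ih₂]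
  | mul_X p i ih => rw [map_mul, map_mul, ← mul_assoc, ih, mul_assoc, h, ← mul_assoc]

end MvPolynomial

theorem commute_mul_of_skew_commute {K S : Type*} [Field K] [Ring S] [Algebra K S] {q : K}
    (hq : q ≠ 0) {a d x : S} (ha : a * x = q⁻¹ • (x * a))
    (hd : d * x = q • (x * d)) : Commute x (a * d) := by
  have hxa : x * a = q • (a * x) := by rw [ha, smul_smul, mul_inv_cancel₀ hq, one_smul]
  calc x * (a * d) = q • (a * (x * d)) := by rw [← mul_assoc, hxa, smul_mul_assoc, mul_assoc]
    _ = a * d * x := by rw [mul_assoc, hd, mul_smul_comm]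

namespace GWA

variable {k A σ} {a : A} {S : Type*} [Ring S] [Algebra k S]

theorem incl_add (u v : A) :
    GWA.incl k A σ a (u + v) = GWA.incl k A σ a u + GWA.incl k A σ a v := by
  simpa [GWA.incl] using RingQuot.mkAlgHom_rel k (Wrel.add (σ := σ) (a := a) u v)

theorem incl_mul (u v : A) :
    GWA.incl k A σ a (u * v) = GWA.incl k A σ a u * GWA.incl k A σ a v := by
  simpa [GWA.incl] using RingQuot.mkAlgHom_rel k (Wrel.mul (σ := σ) (a := a) u v)

theorem incl_algebraMap (c : k) : GWA.incl k A σ a (algebraMap k A c) = algebraMap k _ c := by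
  simpa [GWA.incl] using RingQuot.mkAlgHom_rel k (Wrel.alg (σ := σ) (a := a) c)

variable (a) in
def inclHom : A →ₐ[k] GWA k A σ a where
  toFun := GWA.incl k A σ a
  map_one' := by simpa using incl_algebraMap (σ := σ) (a := a) 1
  map_mul' := incl_mul
  map_zero' := by simpa using incl_algebraMap (σ := σ) (a := a) 0
  map_add' := incl_add
  commutes' := incl_algebraMap

theorem inclHom_apply (u : A) : inclHom (σ := σ) a u = GWA.incl k A σ a u := rfl

theorem Y_mul_X : GWA.Y k A σ a * GWA.X k A σ a = inclHom a a := by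
  simpa [inclHom_apply, GWA.incl, GWA.X, GWA.Y] using
    RingQuot.mkAlgHom_rel k (Wrel.yx (σ := σ) (a := a))

theorem X_mul_Y : GWA.X k A σ a * GWA.Y k A σ a = inclHom a (σ a) := by
  simpa [inclHom_apply, GWA.incl, GWA.X, GWA.Y] using
    RingQuot.mkAlgHom_rel k (Wrel.xy (σ := σ) (a := a))

theorem X_mul_inclHom (u : A) :
    GWA.X k A σ a * inclHom a u = inclHom a (σ u) * GWA.X k A σ a := by
  simpa [inclHom_apply, GWA.incl, GWA.X, GWA.Y] using
    RingQuot.mkAlgHom_rel k (Wrel.xu (σ := σ) (a := a) u)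

theorem Y_mul_inclHom (u : A) :
    GWA.Y k A σ a * inclHom a (σ u) = inclHom a u * GWA.Y k A σ a := by
  simpa [inclHom_apply, GWA.incl, GWA.X, GWA.Y] using
    RingQuot.mkAlgHom_rel k (Wrel.yu (σ := σ) (a := a) u)

def lift (f : A →ₐ[k] S) (x y : S) (hyx : y * x = f a) (hxy : x * y = f (σ a))
    (hx : ∀ u, x * f u = f (σ u) * x) (hy : ∀ u, y * f (σ u) = f u * y) :
    GWA k A σ a →ₐ[k] S :=
  RingQuot.liftAlgHom k ⟨FreeAlgebra.lift k fun | .incl u => f u | .x => x | .y => y, by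
    rintro _ _ (_ | _ | _ | _ | _ | _ | _) <;> simp [*]⟩

section lift

variable (f : A →ₐ[k] S) (x y : S) (hyx : y * x = f a) (hxy : x * y = f (σ a))
    (hx : ∀ u, x * f u = f (σ u) * x) (hy : ∀ u, y * f (σ u) = f u * y)

@[simp]
theorem lift_inclHom (u : A) : lift f x y hyx hxy hx hy (inclHom a u) = f u := by
  simp [lift, inclHom, GWA.incl]

@[simp]
theorem lift_X : lift f x y hyx hxy hx hy (GWA.X k A σ a) = x := by
  simp [lift, GWA.X]

@[simp]
theorem lift_Y : lift f x y hyx hxy hx hy (GWA.Y k A σ a) = y := by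
  simp [lift, GWA.Y]

end lift

theorem algHom_ext {f g : GWA k A σ a →ₐ[k] S}
    (h_incl : f.comp (inclHom a) = g.comp (inclHom a))
    (hX : f (GWA.X k A σ a) = g (GWA.X k A σ a)) (hY : f (GWA.Y k A σ a) = g (GWA.Y k A σ a)) :
    f = g :=
  RingQuot.ringQuot_ext' _ _ _ <| FreeAlgebra.hom_ext <| funext fun
    | .incl u => AlgHom.congr_fun h_incl u
    | .x => hX
    | .y => hY

end GWA

namespace OqM2

variable {k q} {S : Type*} [Ring S] [Algebra k S]

theorem commute_B_C : Commute (B k q) (C k q) := by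
  simpa [Commute, SemiconjBy, OqM2.B, OqM2.C] using
    RingQuot.mkAlgHom_rel k (M2Rel.bc (k := k) (q := q))

theorem Ag_mul_B : Ag k q * B k q = q⁻¹ • (B k q * Ag k q) := by
  simpa [OqM2.Ag, OqM2.B] using RingQuot.mkAlgHom_rel k (M2Rel.ab (k := k) (q := q))

theorem Ag_mul_C : Ag k q * C k q = q⁻¹ • (C k q * Ag k q) := by
  simpa [OqM2.Ag, OqM2.C] using RingQuot.mkAlgHom_rel k (M2Rel.ac (k := k) (q := q))

theorem D_mul_B : D k q * B k q = q • (B k q * D k q) := by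
  simpa [OqM2.D, OqM2.B] using RingQuot.mkAlgHom_rel k (M2Rel.db (k := k) (q := q))

theorem D_mul_C : D k q * C k q = q • (C k q * D k q) := by
  simpa [OqM2.D, OqM2.C] using RingQuot.mkAlgHom_rel k (M2Rel.dc (k := k) (q := q))

theorem Ag_mul_D : Ag k q * D k q = D k q * Ag k q + (q⁻¹ - q) • (B k q * C k q) := by
  simpa [OqM2.Ag, OqM2.B, OqM2.C, OqM2.D] using
    RingQuot.mkAlgHom_rel k (M2Rel.ad (k := k) (q := q))

def lift (a b c d : S) (hbc : b * c = c * b) (hab : a * b = q⁻¹ • (b * a))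
    (hac : a * c = q⁻¹ • (c * a)) (hdb : d * b = q • (b * d)) (hdc : d * c = q • (c * d))
    (had : a * d = d * a + (q⁻¹ - q) • (b * c)) : OqM2 k q →ₐ[k] S :=
  RingQuot.liftAlgHom k ⟨FreeAlgebra.lift k ![a, b, c, d], by
    rintro _ _ (_ | _ | _ | _ | _ | _) <;> simp [*]⟩

section lift

variable (a b c d : S) (hbc : b * c = c * b) (hab : a * b = q⁻¹ • (b * a))
    (hac : a * c = q⁻¹ • (c * a)) (hdb : d * b = q • (b * d)) (hdc : d * c = q • (c * d))
    (had : a * d = d * a + (q⁻¹ - q) • (b * c))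

@[simp]
theorem lift_Ag : lift a b c d hbc hab hac hdb hdc had (Ag k q) = a := by simp [lift, OqM2.Ag]

@[simp]
theorem lift_B : lift a b c d hbc hab hac hdb hdc had (B k q) = b := by simp [lift, OqM2.B]

@[simp]
theorem lift_C : lift a b c d hbc hab hac hdb hdc had (C k q) = c := by simp [lift, OqM2.C]

@[simp]
theorem lift_D : lift a b c d hbc hab hac hdb hdc had (D k q) = d := by simp [lift, OqM2.D]

end lift

theorem algHom_ext {f g : OqM2 k q →ₐ[k] S} (hA : f (Ag k q) = g (Ag k q))
    (hB : f (B k q) = g (B k q)) (hC : f (C k q) = g (C k q)) (hD : f (D k q) = g (D k q)) :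
    f = g :=
  RingQuot.ringQuot_ext' _ _ _ <| FreeAlgebra.hom_ext <| funext fun i ↦ by
    fin_cases i
    exacts [hA, hB, hC, hD]

theorem qdet_eq_D_mul_Ag : qdet k q = D k q * Ag k q - q • (B k q * C k q) := by
  rw [qdet, Ag_mul_D]
  module

theorem B_mul_Ag (hq : q ≠ 0) : B k q * Ag k q = q • (Ag k q * B k q) := by
  rw [Ag_mul_B, smul_smul, mul_inv_cancel₀ hq, one_smul]

theorem C_mul_Ag (hq : q ≠ 0) : C k q * Ag k q = q • (Ag k q * C k q) := by
  rw [Ag_mul_C, smul_smul, mul_inv_cancel₀ hq, one_smul]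

theorem commute_B_qdet (hq : q ≠ 0) : Commute (B k q) (qdet k q) :=
  (commute_mul_of_skew_commute hq Ag_mul_B D_mul_B).sub_right
    (((Commute.refl _).mul_right commute_B_C).smul_right _)

theorem commute_C_qdet (hq : q ≠ 0) : Commute (C k q) (qdet k q) :=
  (commute_mul_of_skew_commute hq Ag_mul_C D_mul_C).sub_right
    ((commute_B_C.symm.mul_right (Commute.refl _)).smul_right _)

theorem B_mul_C_mul_Ag (hq : q ≠ 0) :
    B k q * C k q * Ag k q = (q * q) • (Ag k q * (B k q * C k q)) := by
  rw [mul_assoc, C_mul_Ag hq, mul_smul_comm, ← mul_assoc, B_mul_Ag hq, smul_mul_assoc, smul_smul,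
    mul_assoc]

theorem D_mul_B_mul_C : D k q * (B k q * C k q) = (q * q) • (B k q * C k q * D k q) := by
  rw [← mul_assoc, D_mul_B, smul_mul_assoc, mul_assoc, D_mul_C, mul_smul_comm, smul_smul,
    ← mul_assoc]

theorem commute_Ag_qdet (hq : q ≠ 0) : Commute (Ag k q) (qdet k q) := by
  have hq' : q⁻¹ * (q * q) = q := by field_simp
  calc Ag k q * qdet k q = Ag k q * D k q * Ag k q - q • (Ag k q * (B k q * C k q)) := by
        rw [qdet_eq_D_mul_Ag, mul_sub, mul_smul_comm, mul_assoc]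
    _ = qdet k q * Ag k q := by
        rw [qdet, sub_mul, smul_mul_assoc, B_mul_C_mul_Ag hq, smul_smul, hq']

theorem commute_D_qdet (hq : q ≠ 0) : Commute (D k q) (qdet k q) := by
  have hq' : q⁻¹ * (q * q) = q := by field_simp
  calc D k q * qdet k q = D k q * Ag k q * D k q - q • (B k q * C k q * D k q) := by
        rw [qdet, mul_sub, mul_smul_comm, D_mul_B_mul_C, smul_smul, hq', ← mul_assoc]
    _ = qdet k q * D k q := by
        rw [qdet_eq_D_mul_Ag, sub_mul, smul_mul_assoc]

end OqM2

section

open MvPolynomial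

variable {k q}

local notation "𝔸" => MvPolynomial (Fin 3) k

def OqM2.ofMvPolynomial (hq : q ≠ 0) : 𝔸 →ₐ[k] OqM2 k q :=
  aevalOfCommute ![OqM2.qdet k q, OqM2.B k q, OqM2.C k q] <| by
    intro i j
    fin_cases i <;> fin_cases j <;>
      simp [OqM2.commute_B_qdet hq, OqM2.commute_C_qdet hq, (OqM2.commute_B_qdet hq).symm,
        (OqM2.commute_C_qdet hq).symm, OqM2.commute_B_C, OqM2.commute_B_C.symm]

@[simp]
theorem OqM2.ofMvPolynomial_X_zero (hq : q ≠ 0) :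
    OqM2.ofMvPolynomial hq (X 0) = OqM2.qdet k q := by
  simp [OqM2.ofMvPolynomial]

@[simp]
theorem OqM2.ofMvPolynomial_X_one (hq : q ≠ 0) : OqM2.ofMvPolynomial hq (X 1) = OqM2.B k q := by
  simp [OqM2.ofMvPolynomial]

@[simp]
theorem OqM2.ofMvPolynomial_X_two (hq : q ≠ 0) : OqM2.ofMvPolynomial hq (X 2) = OqM2.C k q := by
  simp [OqM2.ofMvPolynomial]

theorem map_X_zero_add_smul_X_one_mul_X_two (hq : q ≠ 0) {σ : 𝔸 ≃ₐ[k] 𝔸}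
    (hu : σ (X 0) = X 0) (hv : σ (X 1) = q⁻¹ • X 1) (hw : σ (X 2) = q⁻¹ • X 2) :
    σ (X 0 + q • (X 1 * X 2)) = X 0 + q⁻¹ • (X 1 * X 2) := by
  have hq' : q * (q⁻¹ * q⁻¹) = q⁻¹ := by field_simp
  rw [map_add, map_smul, map_mul, hu, hv, hw, smul_mul_smul_comm, smul_smul, hq']

namespace OqM2

theorem Ag_mul_ofMvPolynomial (hq : q ≠ 0) {σ : 𝔸 ≃ₐ[k] 𝔸} (hu : σ (X 0) = X 0)
    (hv : σ (X 1) = q⁻¹ • X 1) (hw : σ (X 2) = q⁻¹ • X 2) (p : 𝔸) :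
    Ag k q * ofMvPolynomial hq p = ofMvPolynomial hq (σ p) * Ag k q := by
  refine mul_algHom_eq_of_forall_X (g := (ofMvPolynomial hq).comp σ.toAlgHom) (fun i ↦ ?_) p
  fin_cases i
  · simpa [hu] using (commute_Ag_qdet hq).eq
  · simpa [hv, smul_mul_assoc] using Ag_mul_B
  · simpa [hw, smul_mul_assoc] using Ag_mul_C

theorem D_mul_ofMvPolynomial (hq : q ≠ 0) {σ : 𝔸 ≃ₐ[k] 𝔸} (hu : σ (X 0) = X 0)
    (hv : σ (X 1) = q⁻¹ • X 1) (hw : σ (X 2) = q⁻¹ • X 2) (p : 𝔸) :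
    D k q * ofMvPolynomial hq (σ p) = ofMvPolynomial hq p * D k q := by
  refine mul_algHom_eq_of_forall_X (f := (ofMvPolynomial hq).comp σ.toAlgHom) (fun i ↦ ?_) p
  fin_cases i
  · simpa [hu] using (commute_D_qdet hq).eq
  · simp [hv, D_mul_B, smul_smul, hq]
  · simp [hw, D_mul_C, smul_smul, hq]

end OqM2

def gwaToOqM2 (hq : q ≠ 0) {σ : 𝔸 ≃ₐ[k] 𝔸} (hu : σ (X 0) = X 0)
    (hv : σ (X 1) = q⁻¹ • X 1) (hw : σ (X 2) = q⁻¹ • X 2) :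
    GWA k 𝔸 σ (X 0 + q • (X 1 * X 2)) →ₐ[k] OqM2 k q :=
  GWA.lift (OqM2.ofMvPolynomial hq) (OqM2.Ag k q) (OqM2.D k q)
    (by simp [OqM2.qdet_eq_D_mul_Ag])
    (by simp [map_X_zero_add_smul_X_one_mul_X_two hq hu hv hw, OqM2.qdet])
    (OqM2.Ag_mul_ofMvPolynomial hq hu hv hw) (OqM2.D_mul_ofMvPolynomial hq hu hv hw)

def oqM2ToGwa (hq : q ≠ 0) {σ : 𝔸 ≃ₐ[k] 𝔸} (hu : σ (X 0) = X 0)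
    (hv : σ (X 1) = q⁻¹ • X 1) (hw : σ (X 2) = q⁻¹ • X 2) :
    OqM2 k q →ₐ[k] GWA k 𝔸 σ (X 0 + q • (X 1 * X 2)) :=
  OqM2.lift (GWA.X k 𝔸 σ _) (GWA.inclHom _ (X 1)) (GWA.inclHom _ (X 2)) (GWA.Y k 𝔸 σ _)
    (by rw [← map_mul, mul_comm, map_mul])
    (by simp [GWA.X_mul_inclHom, hv])
    (by simp [GWA.X_mul_inclHom, hw])
    (by
      have h := GWA.Y_mul_inclHom (σ := σ) (a := X 0 + q • (X 1 * X 2)) (X 1)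
      rwa [hv, map_smul, mul_smul_comm, inv_smul_eq_iff₀ hq] at h)
    (by
      have h := GWA.Y_mul_inclHom (σ := σ) (a := X 0 + q • (X 1 * X 2)) (X 2)
      rwa [hw, map_smul, mul_smul_comm, inv_smul_eq_iff₀ hq] at h)
    (by
      rw [GWA.X_mul_Y, GWA.Y_mul_X, map_X_zero_add_smul_X_one_mul_X_two hq hu hv hw, ← map_mul,
        ← map_smul, ← map_add]
      congr 1
      module)

theorem oqM2ToGwa_qdet (hq : q ≠ 0) {σ : 𝔸 ≃ₐ[k] 𝔸} (hu : σ (X 0) = X 0)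
    (hv : σ (X 1) = q⁻¹ • X 1) (hw : σ (X 2) = q⁻¹ • X 2) :
    oqM2ToGwa hq hu hv hw (OqM2.qdet k q) = GWA.inclHom _ (X 0) := by
  simp only [OqM2.qdet, oqM2ToGwa, map_sub, map_mul, map_smul, OqM2.lift_Ag, OqM2.lift_B,
    OqM2.lift_C, OqM2.lift_D]
  rw [GWA.X_mul_Y, map_X_zero_add_smul_X_one_mul_X_two hq hu hv hw, ← map_mul, ← map_smul,
    ← map_sub, add_sub_cancel_right]

def gwaEquivOqM2 (hq : q ≠ 0) {σ : 𝔸 ≃ₐ[k] 𝔸} (hu : σ (X 0) = X 0)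
    (hv : σ (X 1) = q⁻¹ • X 1) (hw : σ (X 2) = q⁻¹ • X 2) :
    GWA k 𝔸 σ (X 0 + q • (X 1 * X 2)) ≃ₐ[k] OqM2 k q :=
  AlgEquiv.ofAlgHom (gwaToOqM2 hq hu hv hw) (oqM2ToGwa hq hu hv hw)
    (OqM2.algHom_ext (by simp [gwaToOqM2, oqM2ToGwa]) (by simp [gwaToOqM2, oqM2ToGwa])
      (by simp [gwaToOqM2, oqM2ToGwa]) (by simp [gwaToOqM2, oqM2ToGwa]))
    (GWA.algHom_ext
      (MvPolynomial.algHom_ext fun i ↦ by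
        fin_cases i
        · simpa [gwaToOqM2] using oqM2ToGwa_qdet hq hu hv hw
        · simp [gwaToOqM2, oqM2ToGwa]
        · simp [gwaToOqM2, oqM2ToGwa])
      (by simp [gwaToOqM2, oqM2ToGwa]) (by simp [gwaToOqM2, oqM2ToGwa]))

end

/-- For `A = k[u,v,w]`, `a = u + qvw` and `σ(u) = u`, `σ(v) = q⁻¹v`,
`σ(w) = q⁻¹w`, the generalized Weyl algebra `W_{a,σ}` is isomorphic to the quantum matrix
algebra `O_q(M₂)` via `u ↦ Ω` (the quantum determinant), `v ↦ b`, `w ↦ c`, `x ↦ a`,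
`y ↦ d`. -/
theorem gwa_equiv_oqm2 (hq0 : q ≠ 0)
    (σ : MvPolynomial (Fin 3) k ≃ₐ[k] MvPolynomial (Fin 3) k)
    (hu : σ (MvPolynomial.X 0) = MvPolynomial.X 0)
    (hv : σ (MvPolynomial.X 1) = q⁻¹ • MvPolynomial.X 1)
    (hw : σ (MvPolynomial.X 2) = q⁻¹ • MvPolynomial.X 2) :
    ∃ e : GWA k (MvPolynomial (Fin 3) k) σ
        (MvPolynomial.X 0 + q • (MvPolynomial.X 1 * MvPolynomial.X 2)) ≃ₐ[k] OqM2 k q,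
      e (GWA.incl k (MvPolynomial (Fin 3) k) σ
          (MvPolynomial.X 0 + q • (MvPolynomial.X 1 * MvPolynomial.X 2))
          (MvPolynomial.X 0)) = OqM2.qdet k q ∧
      e (GWA.incl k (MvPolynomial (Fin 3) k) σ
          (MvPolynomial.X 0 + q • (MvPolynomial.X 1 * MvPolynomial.X 2))
          (MvPolynomial.X 1)) = OqM2.B k q ∧
      e (GWA.incl k (MvPolynomial (Fin 3) k) σ
          (MvPolynomial.X 0 + q • (MvPolynomial.X 1 * MvPolynomial.X 2))
          (MvPolynomial.X 2)) = OqM2.C k q ∧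
      e (GWA.X k (MvPolynomial (Fin 3) k) σ
          (MvPolynomial.X 0 + q • (MvPolynomial.X 1 * MvPolynomial.X 2))) = OqM2.Ag k q ∧
      e (GWA.Y k (MvPolynomial (Fin 3) k) σ
          (MvPolynomial.X 0 + q • (MvPolynomial.X 1 * MvPolynomial.X 2))) = OqM2.D k q := by
  simp_rw [← GWA.inclHom_apply]
  exact ⟨gwaEquivOqM2 hq0 hu hv hw, by simp [gwaEquivOqM2, gwaToOqM2]⟩
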